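/- arXiv:2208.09353 — 2 statements merged into one kernel-verified Lean document; each statement's English description precedes it below -/
import Mathlib

section
/- Let N and H be groups, φ : H → Aut(N) a homomorphism, and G = N ⋊ H the semidirect product. Assume that N is torsion-free and that for every finite subgroup Ψ ⊆ H, every 1-cocycle Ψ → N (for the action through φ) is principal. Then every finite subgroup of G is conjugate in G, by an element of N, to a subgroup of H = {(1, h) : h ∈ H}. -/
/-! A finite subgroup `Γ` of `N ⋊ H` meets the torsion-free kernel `N` trivially, so the projection
to `H` maps it isomorphically onto a finite subgroup `Ψ ≤ H`. Inverting this isomorphism gives a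
section `δ ↦ (ξ δ, δ)` over `Ψ` whose `N`-component `ξ` is a 1-cocycle; writing it as
`ξ δ = n⁻¹ * φ δ n` is exactly the statement that conjugation by `(n, 1)` carries `Γ` into `H`. -/

/-- A monoid is torsion-free if its only element of finite order is the identity
(the definition `Monoid.IsTorsionFree` of the older Mathlib, since removed). -/
def Monoid.IsTorsionFree (G : Type*) [Monoid G] : Prop :=
  ∀ g : G, g ≠ 1 → ¬IsOfFinOrder g

namespace SemidirectProduct

variable {N H : Type*} [Group N] [Group H] {φ : H →* MulAut N}

theorem eq_one_of_right_eq_one_of_isOfFinOrder (htf : Monoid.IsTorsionFree N)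
    {x : N ⋊[φ] H} (hx : IsOfFinOrder x) (hr : x.right = 1) : x = 1 := by
  have hx_inl : inl x.left = x := by
    simpa [hr] using inl_left_mul_inr_right x
  rw [← hx_inl, (inl_injective (φ := φ)).isOfFinOrder_iff] at hx
  have hl : x.left = 1 := by_contra fun hne ↦ htf x.left hne hx
  rw [← hx_inl, hl, map_one]

theorem rightHom_comp_subtype_injective (htf : Monoid.IsTorsionFree N)
    (Γ : Subgroup (N ⋊[φ] H)) [Finite Γ] :
    Function.Injective (rightHom.comp Γ.subtype) := by
  refine (injective_iff_map_eq_one _).mpr fun x hx ↦ Subtype.ext ?_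
  refine eq_one_of_right_eq_one_of_isOfFinOrder htf ?_ hx
  exact (Γ.subtype_injective.isOfFinOrder_iff).mpr (isOfFinOrder_of_finite x)

theorem left_map_mul_of_right_eq {Ψ : Type*} [Group Ψ] {ι : Ψ →* H} (s : Ψ →* N ⋊[φ] H)
    (hs : ∀ δ, (s δ).right = ι δ) (δ₁ δ₂ : Ψ) :
    (s (δ₁ * δ₂)).left = (s δ₁).left * φ (ι δ₁) (s δ₂).left := by
  rw [map_mul, mul_left, hs]

theorem inl_mul_mul_inv_inl_of_left_eq {x : N ⋊[φ] H} {n : N}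
    (hx : x.left = n⁻¹ * φ x.right n) :
    inl n * x * (inl n)⁻¹ = inr x.right := by
  ext
  · simp [hx]
  · simp

end SemidirectProduct

open SemidirectProduct in
/-- Let `N`, `H` be groups, `φ : H → Aut N` a homomorphism, and
`G = N ⋊[φ] H`. Assume `N` is torsion-free and that for every finite subgroup `Ψ ≤ H`,
every 1-cocycle `Ψ → N` (for the action through `φ`) is principal. Then every finite
subgroup of `G` is conjugate in `G`, by an element of `N`, to a subgroup of
`H = {(1, h)}`. -/
theorem stmt5 {N H : Type*} [Group N] [Group H] (φ : H →* MulAut N)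
    (htf : Monoid.IsTorsionFree N)
    (hcoc : ∀ Ψ : Subgroup H, Finite Ψ →
      ∀ ξ : Ψ → N, (∀ δ₁ δ₂ : Ψ, ξ (δ₁ * δ₂) = ξ δ₁ * φ (δ₁ : H) (ξ δ₂)) →
        ∃ n : N, ∀ δ : Ψ, ξ δ = n⁻¹ * φ (δ : H) n)
    (Γ : Subgroup (N ⋊[φ] H)) (hΓ : Finite Γ) :
    ∃ n : N, ∀ x ∈ Γ,
      SemidirectProduct.inl n * x * (SemidirectProduct.inl n)⁻¹ ∈
        (SemidirectProduct.inr : H →* N ⋊[φ] H).range := by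
  let e := MonoidHom.ofInjective (rightHom_comp_subtype_injective htf Γ)
  let s : _ →* N ⋊[φ] H := Γ.subtype.comp e.symm.toMonoidHom
  have hs : ∀ δ, (s δ).right = δ := fun δ ↦ by
    have := congrArg Subtype.val (e.apply_symm_apply δ)
    rwa [MonoidHom.ofInjective_apply] at this
  obtain ⟨n, hn⟩ := hcoc _ (Finite.of_equiv _ e.toEquiv) (fun δ ↦ (s δ).left)
    (left_map_mul_of_right_eq (ι := Subgroup.subtype _) s hs)
  refine ⟨n, fun x hx ↦ ⟨x.right, ?_⟩⟩
  have hsx : s (e ⟨x, hx⟩) = x := by simp [s]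
  have hxl : x.left = n⁻¹ * φ x.right n := by
    simpa [hsx, e, MonoidHom.ofInjective_apply] using hn (e ⟨x, hx⟩)
  exact (inl_mul_mul_inv_inl_of_left_eq hxl).symm
end

section
/- Let k be a field of characteristic 0, let V be a vector space over k, and let H be a group acting on the additive group of V by additive group automorphisms; form the semidirect product G = V ⋊ H (with V written as a multiplicative group via this identification). Then every finite subgroup of G is conjugate in G, by an element of V, to a subgroup of H = {(0, h) : h ∈ H}. -/
/-- Reinterpret an action of `H` on the additive group of `V` by additive
automorphisms as an action on `Multiplicative V` by multiplicative automorphisms. -/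
def addAutHomToMulAut {V : Type*} [AddCommGroup V] {H : Type*} [Group H]
    (ρ : H →* Multiplicative (AddAut V)) : H →* MulAut (Multiplicative V) where
  toFun h := AddEquiv.toMultiplicative (Multiplicative.toAdd (ρ h))
  map_one' := by
    show AddEquiv.toMultiplicative (Multiplicative.toAdd (ρ 1)) = 1
    rw [map_one]; ext x; rfl
  map_mul' h₁ h₂ := by
    show AddEquiv.toMultiplicative (Multiplicative.toAdd (ρ (h₁ * h₂))) =
      AddEquiv.toMultiplicative (Multiplicative.toAdd (ρ h₁)) *
        AddEquiv.toMultiplicative (Multiplicative.toAdd (ρ h₂))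
    rw [map_mul]; ext x; rfl

/-!
A finite subgroup `Γ` of `V ⋊ H` acts on `V` through its image in `H`, and `γ ↦ γ.left` is a
1-cocycle for this action. Averaging a 1-cocycle `f` over the finite group `Γ`, whose order is
invertible in `k`, exhibits it as the coboundary of `v = -|Γ|⁻¹ ∑ f`; and `γ.left = γ • v - v`
says precisely that conjugation by `v` kills the `V`-component of `γ`.
-/

open SemidirectProduct

namespace groupCohomology

theorem isCoboundary₁_of_isCocycle₁_of_finite {k G V : Type*} [DivisionRing k] [CharZero k]
    [Group G] [Finite G] [AddCommGroup V] [Module k V] [DistribMulAction G V] {f : G → V}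
    (hf : IsCocycle₁ f) : IsCoboundary₁ f := by
  have := Fintype.ofFinite G
  set n := Fintype.card G
  set S := ∑ g, f g
  have hn : (n : k) ≠ 0 := Nat.cast_ne_zero.2 Fintype.card_ne_zero
  have hS (g : G) : n • f g = S - g • S := by
    have hshift : ∑ h, f (g * h) = S := Equiv.sum_comp (Equiv.mulLeft g) f
    simp only [hf g, Finset.sum_add_distrib, ← Finset.smul_sum, Finset.sum_const,
      Finset.card_univ] at hshift
    exact eq_sub_of_add_eq' hshift
  refine ⟨-((n : k)⁻¹ • S), fun g => ?_⟩
  calc g • -((n : k)⁻¹ • S) - -((n : k)⁻¹ • S)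
      = (n : k)⁻¹ • (S - g • S) := by
        rw [smul_neg, ← DistribMulAction.toAddMonoidHom_apply,
          map_inv_natCast_smul _ k k, DistribMulAction.toAddMonoidHom_apply, smul_sub]
        abel
    _ = f g := by rw [← hS, ← Nat.cast_smul_eq_nsmul k, inv_smul_smul₀ hn]

end groupCohomology

namespace SemidirectProduct

variable {N G : Type*} [Group N] [Group G] {φ : G →* MulAut N}

theorem mem_range_inr_iff {x : N ⋊[φ] G} : x ∈ (inr : G →* N ⋊[φ] G).range ↔ x.left = 1 :=
  ⟨by rintro ⟨g, rfl⟩; rfl, fun h => ⟨x.right, by ext <;> simp [h]⟩⟩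

theorem left_inl_mul_mul_inv_inl (n : N) (x : N ⋊[φ] G) :
    (inl n * x * (inl n)⁻¹).left = n * x.left * φ x.right n⁻¹ := by
  simp

end SemidirectProduct

abbrev DistribMulAction.ofAddAutHom {G V : Type*} [Monoid G] [AddCommGroup V]
    (ρ : G →* Multiplicative (AddAut V)) : DistribMulAction G V where
  smul g v := Multiplicative.toAdd (ρ g) v
  one_smul v := by
    show Multiplicative.toAdd (ρ 1) v = v
    rw [map_one]; rfl
  mul_smul g h v := by
    show Multiplicative.toAdd (ρ (g * h)) v =
      Multiplicative.toAdd (ρ g) (Multiplicative.toAdd (ρ h) v)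
    rw [map_mul]; rfl
  smul_zero g := map_zero _
  smul_add g := map_add _

/-- Let `k` be a field of characteristic `0`, `V` a `k`-vector space,
and `H` a group acting on the additive group of `V` by additive automorphisms; form the
semidirect product `G = V ⋊ H` (writing `V` multiplicatively). Then every finite
subgroup of `G` is conjugate in `G`, by an element of `V`, to a subgroup of
`H = {(0, h)}`. -/
theorem stmt6 {k : Type*} [Field k] [CharZero k] {V : Type*} [AddCommGroup V] [Module k V]
    {H : Type*} [Group H] (ρ : H →* Multiplicative (AddAut V))
    (Γ : Subgroup (Multiplicative V ⋊[addAutHomToMulAut ρ] H)) (hΓ : Finite Γ) :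
    ∃ v : V, ∀ x ∈ Γ,
      SemidirectProduct.inl (Multiplicative.ofAdd v) * x *
          (SemidirectProduct.inl (Multiplicative.ofAdd v))⁻¹ ∈
        (SemidirectProduct.inr : H →* Multiplicative V ⋊[addAutHomToMulAut ρ] H).range := by
  let _ := DistribMulAction.ofAddAutHom (ρ.comp (rightHom.comp Γ.subtype))
  have hcocycle : groupCohomology.IsCocycle₁ fun γ : Γ => Multiplicative.toAdd γ.1.left :=
    -- `(γ * δ).left = γ.left + γ • δ.left` holds by definition, in additive notation
    fun _ _ => add_comm _ _
  obtain ⟨v, hv⟩ := groupCohomology.isCoboundary₁_of_isCocycle₁_of_finite (k := k) hcocycle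
  refine ⟨v, fun x hx => ?_⟩
  rw [mem_range_inr_iff, left_inl_mul_mul_inv_inl]
  apply Multiplicative.toAdd.injective
  have hx_left := hv ⟨x, hx⟩
  change Multiplicative.toAdd (ρ x.right) v - v = Multiplicative.toAdd x.left at hx_left
  change v + Multiplicative.toAdd x.left + Multiplicative.toAdd (ρ x.right) (-v) = 0
  rw [← hx_left, map_neg]
  abel
end
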